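/- arXiv:1302.2018 — 2 statements merged into one kernel-verified Lean document; each statement's English description precedes it below -/
import Mathlib

section
/- Let λ ∈ [1/2, 1]. Let F(z) = z + Σ_{k=1}^2 |z|^{2(k-1)} Σ_{n=2}^∞ (a_{n,k} z^n + conj(b_{n,k}) conj(z)^n) be a polyharmonic mapping of class HS_2^0(λ), and let H(z) = z + Σ_{k=1}^2 |z|^{2(k-1)} Σ_{n=2}^∞ (A_{n,k} z^n + conj(B_{n,k}) conj(z)^n) be a polyharmonic mapping whose coefficients satisfy |A_{n,k}| ≤ (n+1)/2 and |B_{n,k}| ≤ (n−1)/2 for all n ≥ 2 and k ∈ {1,2}. Then the integral convolution (F⋄H)(z) = z + Σ_{k=1}^2 |z|^{2(k-1)} Σ_{n=2}^∞ ((a_{n,k} A_{n,k}/n) z^n + conj(b_{n,k} B_{n,k}/n) conj(z)^n) belongs to HC_2^0, i.e., Σ_{k=1}^2 Σ_{n=2}^∞ (2(k−1) + n²)(|a_{n,k} A_{n,k}| + |b_{n,k} B_{n,k}|)/n ≤ 1; moreover, if λ = 1, then the convolution (F∗H)(z) = z + Σ_{k=1}^2 |z|^{2(k-1)} Σ_{n=2}^∞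 (a_{n,k} A_{n,k} z^n + conj(b_{n,k} B_{n,k}) conj(z)^n) satisfies Σ_{k=1}^2 Σ_{n=2}^∞ (2(k−1) + n)(|a_{n,k} A_{n,k}| + |b_{n,k} B_{n,k}|) ≤ 1, i.e., F∗H belongs to HS_2^0. -/
open Complex Metric Set

/-- The polyharmonic mapping associated to coefficients `a b : ℕ → ℕ → ℂ`
(`a n k` is the coefficient `a_{n,k}`):
`F(z) = Σ_{k=1}^p |z|^{2(k-1)} Σ_{n=1}^∞ (a_{n,k} z^n + conj(b_{n,k}) conj(z)^n)`. -/
noncomputable def polyF (p : ℕ) (a b : ℕ → ℕ → ℂ) (z : ℂ) : ℂ :=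
  ∑ k ∈ Finset.Icc 1 p, (((‖z‖ : ℝ) : ℂ)) ^ (2 * (k - 1)) *
    ∑' n : ℕ, if 1 ≤ n then
      a n k * z ^ n + (starRingEnd ℂ) (b n k) * ((starRingEnd ℂ) z) ^ n else 0

/-- The coefficient conditions defining the class `HS_p(λ)`. -/
def HSLam (p : ℕ) (lam : ℝ) (a b : ℕ → ℕ → ℂ) : Prop :=
  a 1 1 = 1 ∧
  (∀ k ∈ Finset.Icc 1 p,
    Summable (fun n : ℕ => ‖a n k‖ + ‖b n k‖)) ∧
  (∀ k ∈ Finset.Icc 1 p, Summable (fun n : ℕ =>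
    if 2 ≤ n then (2 * ((k : ℝ) - 1) + n * (lam * n + 1 - lam)) *
      (‖a n k‖ + ‖b n k‖) else 0)) ∧
  (∑ k ∈ Finset.Icc 1 p, ∑' n : ℕ,
      (if 2 ≤ n then (2 * ((k : ℝ) - 1) + n * (lam * n + 1 - lam)) *
        (‖a n k‖ + ‖b n k‖) else 0))
    ≤ 2 - ∑ k ∈ Finset.Icc 1 p,
        (2 * (k : ℝ) - 1) * (‖a 1 k‖ + ‖b 1 k‖) ∧
  1 ≤ ∑ k ∈ Finset.Icc 1 p,
        (2 * (k : ℝ) - 1) * (‖a 1 k‖ + ‖b 1 k‖) ∧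
  ∑ k ∈ Finset.Icc 1 p,
        (2 * (k : ℝ) - 1) * (‖a 1 k‖ + ‖b 1 k‖) < 2

/-- The coefficient conditions defining the class `HS_p^0(λ)`. -/
def HSLam0 (p : ℕ) (lam : ℝ) (a b : ℕ → ℕ → ℂ) : Prop :=
  HSLam p lam a b ∧ b 1 1 = 0 ∧ ∀ k, 2 ≤ k → k ≤ p → a 1 k = 0 ∧ b 1 k = 0

/-! Both claims reduce, term by term, to the coefficient condition of `F`: since
`|A_{n,k}|, |B_{n,k}| ≤ (n+1)/2`, it suffices that the new weight times `(n+1)/2` is at most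
the weight `2(k-1) + n(λn + 1 - λ)` of `HS_2(λ)`; for `F∗H` this uses `2(k-1) ≤ 2 ≤ n`. -/

lemma mul_add_mul_le_of_weight_le {w M W x y X Y : ℝ} (hw : 0 ≤ w) (hx : 0 ≤ x) (hy : 0 ≤ y)
    (hX : X ≤ M) (hY : Y ≤ M) (hwM : w * M ≤ W) :
    w * (x * X + y * Y) ≤ W * (x + y) :=
  calc w * (x * X + y * Y) ≤ w * M * (x + y) := by nlinarith [mul_nonneg hw hx, mul_nonneg hw hy]
    _ ≤ W * (x + y) := by gcongr

lemma div_mul_succ_div_two_le {c n lam : ℝ} (hc : 0 ≤ c) (hn : 1 ≤ n) (hlam : 1 / 2 ≤ lam) :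
    (c + n ^ 2) / n * ((n + 1) / 2) ≤ c + n * (lam * n + 1 - lam) := by
  rw [div_mul_eq_mul_div, div_le_iff₀ (by linarith)]
  have hn1 : 0 ≤ n - 1 := sub_nonneg.2 hn
  nlinarith [mul_nonneg hc hn1, mul_nonneg (sq_nonneg n) (mul_nonneg hn1 (sub_nonneg.2 hlam))]

lemma mul_succ_div_two_le {c n : ℝ} (hcn : c ≤ n) (hn : 1 ≤ n) :
    (c + n) * ((n + 1) / 2) ≤ c + n * n := by
  nlinarith [mul_nonneg (sub_nonneg.2 hn) (sub_nonneg.2 hcn)]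

lemma HSLam.sum_tsum_le_one {p : ℕ} {lam : ℝ} {a b : ℕ → ℕ → ℂ} (hF : HSLam p lam a b)
    (f : ℕ → ℕ → ℝ) (hf0 : ∀ k ∈ Finset.Icc 1 p, ∀ n, 2 ≤ n → 0 ≤ f k n)
    (hf : ∀ k ∈ Finset.Icc 1 p, ∀ n, 2 ≤ n →
      f k n ≤ (2 * ((k : ℝ) - 1) + n * (lam * n + 1 - lam)) * (‖a n k‖ + ‖b n k‖)) :
    ∑ k ∈ Finset.Icc 1 p, ∑' n : ℕ, (if 2 ≤ n then f k n else 0) ≤ 1 := by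
  obtain ⟨-, -, hsum, hbound, hone, -⟩ := hF
  refine (Finset.sum_le_sum fun k hk => ?_).trans (hbound.trans (by linarith))
  have hle : ∀ n : ℕ, (if 2 ≤ n then f k n else 0) ≤
      if 2 ≤ n then (2 * ((k : ℝ) - 1) + n * (lam * n + 1 - lam)) *
        (‖a n k‖ + ‖b n k‖) else 0 := by
    intro n
    split_ifs with hn
    exacts [hf k hk n hn, le_rfl]
  have hnonneg : ∀ n : ℕ, 0 ≤ if 2 ≤ n then f k n else 0 := by
    intro n
    split_ifs with hn
    exacts [hf0 k hk n hn, le_rfl]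
  exact (Summable.of_nonneg_of_le hnonneg hle (hsum k hk)).tsum_le_tsum hle (hsum k hk)

/-- If `F ∈ HS_2^0(λ)` with `1/2 ≤ λ ≤ 1` and the coefficients of the biharmonic
mapping `H` satisfy `|A_{n,k}| ≤ (n+1)/2`, `|B_{n,k}| ≤ (n−1)/2`, then the integral
convolution `F⋄H` belongs to `HC_2^0`; moreover, if `λ = 1` then the convolution
`F∗H` belongs to `HS_2^0`. -/
theorem biharmonic_convolutions
    (lam : ℝ) (hlam : lam ∈ Set.Icc (1 / 2 : ℝ) 1)
    (a b A B : ℕ → ℕ → ℂ) (hF : HSLam0 2 lam a b)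
    (hAB : ∀ n k : ℕ, 2 ≤ n → 1 ≤ k → k ≤ 2 →
      ‖A n k‖ ≤ ((n : ℝ) + 1) / 2 ∧ ‖B n k‖ ≤ ((n : ℝ) - 1) / 2) :
    (∑ k ∈ Finset.Icc (1 : ℕ) 2, ∑' n : ℕ,
        (if 2 ≤ n then (2 * ((k : ℝ) - 1) + (n : ℝ) ^ 2) *
          (‖a n k * A n k‖ + ‖b n k * B n k‖) / n else 0) ≤ 1) ∧
    (lam = 1 → ∑ k ∈ Finset.Icc (1 : ℕ) 2, ∑' n : ℕ,
        (if 2 ≤ n then (2 * ((k : ℝ) - 1) + (n : ℝ)) *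
          (‖a n k * A n k‖ + ‖b n k * B n k‖) else 0) ≤ 1) := by
  have hweight : ∀ k ∈ Finset.Icc (1 : ℕ) 2, ∀ n : ℕ, 2 ≤ n →
      0 ≤ 2 * ((k : ℝ) - 1) ∧ 2 * ((k : ℝ) - 1) ≤ n ∧ (1 : ℝ) ≤ n ∧
      ‖A n k‖ ≤ ((n : ℝ) + 1) / 2 ∧ ‖B n k‖ ≤ ((n : ℝ) + 1) / 2 := by
    intro k hk n hn
    obtain ⟨hk1, hk2⟩ := Finset.mem_Icc.1 hk
    obtain ⟨hA, hB⟩ := hAB n k hn hk1 hk2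
    have : (1 : ℝ) ≤ k := by exact_mod_cast hk1
    have : (k : ℝ) ≤ 2 := by exact_mod_cast hk2
    have : (2 : ℝ) ≤ n := by exact_mod_cast hn
    refine ⟨by linarith, by linarith, by linarith, hA, by linarith⟩
  refine ⟨hF.1.sum_tsum_le_one _ (fun k hk n hn => ?_) fun k hk n hn => ?_, fun hlam1 => ?_⟩
  · obtain ⟨hc, -, -, -, -⟩ := hweight k hk n hn
    positivity
  · obtain ⟨hc, -, hn1, hA, hB⟩ := hweight k hk n hn
    rw [mul_div_right_comm, norm_mul, norm_mul]
    exact mul_add_mul_le_of_weight_le (by positivity) (norm_nonneg _) (norm_nonneg _) hA hB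
      (div_mul_succ_div_two_le hc hn1 hlam.1)
  · subst hlam1
    refine hF.1.sum_tsum_le_one _ (fun k hk n hn => ?_) fun k hk n hn => ?_
    · obtain ⟨hc, -, -, -, -⟩ := hweight k hk n hn
      positivity
    · obtain ⟨hc, hcn, hn1, hA, hB⟩ := hweight k hk n hn
      rw [norm_mul, norm_mul, one_mul, add_sub_cancel_right]
      exact mul_add_mul_le_of_weight_le (by positivity) (norm_nonneg _) (norm_nonneg _) hA hB
        (mul_succ_div_two_le hcn hn1)
end

section
/- Let p ≥ 1 be an integer, λ ∈ [0,1/2], and let F be a polyharmonic mapping of class HS_p(λ) with coefficients a_{n,k}, b_{n,k}. Then Σ_{k=1}^p Σ_{n=2}^∞ (|a_{n,k}| + |b_{n,k}|) + Σ_{k=2}^p (|a_{1,k}| + |b_{1,k}|) ≤ (1 − |b_{1,1}|)/(2(1+λ)). -/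
open Complex Metric Set

lemma two_mul_one_add_le_weight {lam : ℝ} (hlam : 0 ≤ lam) {k n : ℕ} (hk : 1 ≤ k) (hn : 2 ≤ n) :
    2 * (1 + lam) ≤ 2 * ((k : ℝ) - 1) + n * (lam * n + 1 - lam) := by
  have hk' : (1 : ℝ) ≤ k := by exact_mod_cast hk
  have hn' : (2 : ℝ) ≤ n := by exact_mod_cast hn
  nlinarith [mul_nonneg hlam (mul_nonneg (sub_nonneg.mpr hn') (by linarith : (0 : ℝ) ≤ n + 2))]

lemma mul_tsum_ite_le_tsum_ite_mul {ι : Type*} (P : ι → Prop) [DecidablePred P] {c : ℝ}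
    {w x : ι → ℝ} (hx : ∀ i, 0 ≤ x i) (hxs : Summable x)
    (hwxs : Summable fun i => if P i then w i * x i else 0) (hcw : ∀ i, P i → c ≤ w i) :
    c * ∑' i, (if P i then x i else 0) ≤ ∑' i, if P i then w i * x i else 0 := by
  have hs : Summable fun i => if P i then x i else 0 :=
    hxs.of_nonneg_of_le (fun i => by split <;> simp [hx i]) (fun i => by split <;> simp [hx i])
  rw [← tsum_mul_left]
  refine (hs.mul_left c).tsum_le_tsum (fun i => ?_) hwxs
  split
  · next hi => exact mul_le_mul_of_nonneg_right (hcw i hi) (hx i)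
  · simp

lemma mul_sum_Icc_two_le_sum_Icc_two {lam : ℝ} (hlam : lam ≤ 1 / 2) (p : ℕ) {x : ℕ → ℝ}
    (hx : ∀ k, 0 ≤ x k) :
    2 * (1 + lam) * ∑ k ∈ Finset.Icc 2 p, x k ≤ ∑ k ∈ Finset.Icc 2 p, (2 * (k : ℝ) - 1) * x k := by
  rw [Finset.mul_sum]
  refine Finset.sum_le_sum fun k hk => mul_le_mul_of_nonneg_right ?_ (hx k)
  have hk : (2 : ℝ) ≤ k := by exact_mod_cast (Finset.mem_Icc.mp hk).1
  linarith

lemma sum_Icc_one_eq_add_sum_Icc_two {M : Type*} [AddCommMonoid M] {p : ℕ} (hp : 1 ≤ p)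
    (f : ℕ → M) : ∑ k ∈ Finset.Icc 1 p, f k = f 1 + ∑ k ∈ Finset.Icc 2 p, f k := by
  rw [← Finset.insert_Icc_add_one_left_eq_Icc hp, Finset.sum_insert (by simp)]
  rfl

/-- Coefficient bound for `F ∈ HS_p(λ)` with `0 ≤ λ ≤ 1/2`. -/
theorem coefficient_sum_bound_small_lambda
    (p : ℕ) (hp : 1 ≤ p) (lam : ℝ) (hlam : lam ∈ Set.Icc (0 : ℝ) (1 / 2))
    (a b : ℕ → ℕ → ℂ) (hF : HSLam p lam a b) :
    ∑ k ∈ Finset.Icc 1 p, ∑' n : ℕ,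
        (if 2 ≤ n then ‖a n k‖ + ‖b n k‖ else 0)
      + ∑ k ∈ Finset.Icc 2 p, (‖a 1 k‖ + ‖b 1 k‖)
      ≤ (1 - ‖b 1 1‖) / (2 * (1 + lam)) := by
  obtain ⟨ha11, hsum, hwsum, hbudget, -, -⟩ := hF
  obtain ⟨hlam0, hlam2⟩ := hlam
  have htail : 2 * (1 + lam) * ∑ k ∈ Finset.Icc 1 p, ∑' n : ℕ,
        (if 2 ≤ n then ‖a n k‖ + ‖b n k‖ else 0)
      ≤ ∑ k ∈ Finset.Icc 1 p, ∑' n : ℕ, (if 2 ≤ n then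
          (2 * ((k : ℝ) - 1) + n * (lam * n + 1 - lam)) * (‖a n k‖ + ‖b n k‖) else 0) := by
    rw [Finset.mul_sum]
    exact Finset.sum_le_sum fun k hk =>
      mul_tsum_ite_le_tsum_ite_mul _ (fun n => by positivity) (hsum k hk) (hwsum k hk)
        fun n hn => two_mul_one_add_le_weight hlam0 (Finset.mem_Icc.mp hk).1 hn
  have hfirst := mul_sum_Icc_two_le_sum_Icc_two hlam2 p (x := fun k => ‖a 1 k‖ + ‖b 1 k‖)
    fun k => by positivity
  have hsplit := sum_Icc_one_eq_add_sum_Icc_two hp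
    fun k : ℕ => (2 * (k : ℝ) - 1) * (‖a 1 k‖ + ‖b 1 k‖)
  rw [ha11, norm_one] at hsplit
  rw [le_div_iff₀ (by positivity)]
  push_cast at hsplit
  linarith
end
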